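/- arXiv:2312.11120 — 2 statements merged into one kernel-verified Lean document; each statement's English description precedes it below -/
import Mathlib

section
/- For n > 2 and k = n−1, the quantity λ = −n(n−1) + n²H² − ‖A‖² is strictly negative for the hypersurface H^{n−1}(−√(1+r²)) × S¹(r) ⊂ ℍ^{n+1}, where H = (n·r² + 1)/(n·r·√(1+r²)) and ‖A‖² = ((n−1)·r⁴ + (1+r²)²)/(r²(1+r²)). -/
/-!
The hypersurface has principal curvatures `κ = r / √(1 + r²)` with multiplicity `n - 1` and
`1 / κ = √(1 + r²) / r`, so `n H = (n - 1) κ + 1/κ` and `‖A‖² = (n - 1) κ² + 1/κ²`. Since the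
product of the two distinct curvatures is `1`, the scalar curvature collapses to
`-(n - 1)(n - 2)(1 - κ²) = -(n - 1)(n - 2) / (1 + r²)`, negative once `n > 2` because `κ < 1`.
-/

open Real

lemma scalar_curvature_eq_of_mul_eq_one (n κ μ : ℝ) (hκμ : κ * μ = 1) :
    -n * (n - 1) + ((n - 1) * κ + μ) ^ 2 - ((n - 1) * κ ^ 2 + μ ^ 2) =
      -((n - 1) * (n - 2) * (1 - κ ^ 2)) := by
  linear_combination 2 * (n - 1) * hκμ

section Curvatures

variable {r : ℝ} (hr : 0 < r)
include hr

lemma div_sqrt_one_add_sq_mul_inv : r / √(1 + r ^ 2) * (√(1 + r ^ 2) / r) = 1 := by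
  have : 0 < √(1 + r ^ 2) := by positivity
  field_simp

lemma sq_div_sqrt_one_add_sq_lt_one : (r / √(1 + r ^ 2)) ^ 2 < 1 := by
  rw [div_pow, sq_sqrt (by positivity), div_lt_one (by positivity)]
  linarith

lemma mul_meanCurvature_eq (n : ℝ) (hn : n ≠ 0) :
    n * ((n * r ^ 2 + 1) / (n * r * √(1 + r ^ 2))) =
      (n - 1) * (r / √(1 + r ^ 2)) + √(1 + r ^ 2) / r := by
  have hs : 0 < √(1 + r ^ 2) := by positivity
  have hsq : √(1 + r ^ 2) ^ 2 = 1 + r ^ 2 := sq_sqrt (by positivity)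
  field_simp
  linear_combination -hsq

lemma normSq_secondFundamentalForm_eq (n : ℝ) :
    ((n - 1) * r ^ 4 + (1 + r ^ 2) ^ 2) / (r ^ 2 * (1 + r ^ 2)) =
      (n - 1) * (r / √(1 + r ^ 2)) ^ 2 + (√(1 + r ^ 2) / r) ^ 2 := by
  have h1 : 0 < 1 + r ^ 2 := by positivity
  rw [div_pow, div_pow, sq_sqrt h1.le]
  field_simp

end Curvatures

theorem stmt_5 (n : ℕ) (hn : 2 < n) (r : ℝ) (hr : 0 < r) (H A2 : ℝ)
    (hH : H = ((n : ℝ) * r ^ 2 + 1) / (n * r * Real.sqrt (1 + r ^ 2)))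
    (hA : A2 = (((n : ℝ) - 1) * r ^ 4 + (1 + r ^ 2) ^ 2) / (r ^ 2 * (1 + r ^ 2))) :
    -(n : ℝ) * ((n : ℝ) - 1) + (n : ℝ) ^ 2 * H ^ 2 - A2 < 0 := by
  have hn' : (2 : ℝ) < n := by exact_mod_cast hn
  rw [show (n : ℝ) ^ 2 * H ^ 2 = (n * H) ^ 2 by ring, hH, hA,
    mul_meanCurvature_eq hr _ (by positivity), normSq_secondFundamentalForm_eq hr,
    scalar_curvature_eq_of_mul_eq_one _ _ _ (div_sqrt_one_add_sq_mul_inv hr), neg_lt_zero]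
  have hκ := sq_div_sqrt_one_add_sq_lt_one hr
  exact mul_pos (mul_pos (by linarith) (by linarith)) (by linarith)
end

section
/- Let Q > 0, n > 2, and let S̄ ≥ 0 be a constant. Suppose g : ℝ → ℝ is a smooth function satisfying S̄ − (n−1)(n−2)·(g'(t))² − 2(n−1)·Q·(g(t))² = 0 for all t, and g(t) > 0 for all t. Then g is constant (with value √(S̄/(2(n−1)Q))). -/
/-- Key lemma: if `g` is positive everywhere, differentiable with differentiable
derivative, and `(deriv g)' < 0` wherever `deriv g > 0`, then `deriv g ≤ 0`. -/
lemma stmt_8_aux (g : ℝ → ℝ) (hg : Differentiable ℝ g)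
    (hg' : Differentiable ℝ (deriv g))
    (hcond : ∀ t, 0 < deriv g t → deriv (deriv g) t < 0)
    (hpos : ∀ t, 0 < g t) : ∀ t, deriv g t ≤ 0 := by
  by_contra hcontra
  push_neg at hcontra
  obtain ⟨t₀, ht₀⟩ := hcontra
  set h := deriv g with hh
  set v := h t₀ with hv
  have hclaim : ∀ t ≤ t₀, v ≤ h t := by
    intro t ht
    by_contra hlt
    push_neg at hlt
    set w := max (h t) (v / 2) with hw
    have hw0 : 0 < w := lt_of_lt_of_le (by linarith) (le_max_right _ _)
    have hwv : w < v := max_lt hlt (by linarith)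
    set K := {u : ℝ | u ∈ Set.Icc t t₀ ∧ h u ≤ w} with hK
    have hKc : IsCompact K := by
      have : K = Set.Icc t t₀ ∩ h ⁻¹' Set.Iic w := by
        ext u; exact Iff.rfl
      rw [this]
      exact isCompact_Icc.inter_right (IsClosed.preimage hg'.continuous isClosed_Iic)
    have htK : t ∈ K := ⟨⟨le_refl _, ht⟩, le_max_left _ _⟩
    have hKne : K.Nonempty := ⟨t, htK⟩
    have hsmem : sSup K ∈ K := hKc.sSup_mem hKne
    set s := sSup K with hs
    have hst₀ : s ≤ t₀ := hsmem.1.2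
    have hsne : s ≠ t₀ := by
      intro he
      have := hsmem.2
      rw [he] at this
      exact absurd this (not_le.mpr (by rw [← hv]; exact hwv))
    have hslt : s < t₀ := lt_of_le_of_ne hst₀ hsne
    have hanti : StrictAntiOn h (Set.Icc s t₀) := by
      apply strictAntiOn_of_deriv_neg (convex_Icc s t₀) (hg'.continuous.continuousOn)
      intro u hu
      rw [interior_Icc] at hu
      have huw : w < h u := by
        by_contra hle
        push_neg at hle
        have huK : u ∈ K := ⟨⟨le_trans hsmem.1.1 hu.1.le, hu.2.le⟩, hle⟩
        exact absurd (le_csSup hKc.bddAbove huK) (not_le.mpr hu.1)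
      exact hcond u (lt_trans hw0 huw)
    have h3 : h t₀ < h s :=
      hanti ⟨le_refl _, hst₀⟩ ⟨hst₀, le_refl _⟩ hslt
    have h4 : v < w := by rw [hv]; exact lt_of_lt_of_le h3 hsmem.2
    linarith
  -- linear decrease contradiction
  have hvpos : 0 < v := ht₀
  set t₁ := t₀ - g t₀ / v with ht₁
  have ht₁lt : t₁ < t₀ := by
    have h5 : 0 < g t₀ / v := div_pos (hpos t₀) hvpos
    rw [ht₁]; linarith
  obtain ⟨c, hc, hceq⟩ := exists_hasDerivAt_eq_slope g h ht₁lt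
    (hg.continuous.continuousOn) (fun x _ => (hg x).hasDerivAt)
  have hcv : v ≤ h c := hclaim c hc.2.le
  rw [hceq] at hcv
  have hpos1 : 0 < t₀ - t₁ := by linarith
  have : v * (t₀ - t₁) ≤ g t₀ - g t₁ := by
    calc v * (t₀ - t₁) ≤ (g t₀ - g t₁) / (t₀ - t₁) * (t₀ - t₁) := by
          apply mul_le_mul_of_nonneg_right hcv hpos1.le
      _ = g t₀ - g t₁ := by field_simp
  have hvt : v * (t₀ - t₁) = g t₀ := by
    rw [ht₁]; field_simp; ring
  have : g t₁ ≤ 0 := by linarith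
  exact absurd this (not_le.mpr (hpos t₁))

theorem stmt_8 (n : ℕ) (hn : 2 < n) (Q Sbar : ℝ) (hQ : 0 < Q) (hS : 0 ≤ Sbar)
    (g : ℝ → ℝ) (hg : ContDiff ℝ (⊤ : ℕ∞) g)
    (hODE : ∀ t, Sbar - ((n : ℝ) - 1) * ((n : ℝ) - 2) * (deriv g t) ^ 2
      - 2 * ((n : ℝ) - 1) * Q * (g t) ^ 2 = 0)
    (hpos : ∀ t, 0 < g t) :
    ∀ t, g t = Real.sqrt (Sbar / (2 * ((n : ℝ) - 1) * Q)) := by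
  have hn1 : (1 : ℝ) < (n : ℝ) := by
    have : 1 < n := by omega
    exact_mod_cast this
  have hn2 : (2 : ℝ) < (n : ℝ) := by exact_mod_cast hn
  set a : ℝ := ((n : ℝ) - 1) * ((n : ℝ) - 2) with ha
  set cc : ℝ := 2 * ((n : ℝ) - 1) * Q with hcc
  have hapos : 0 < a := mul_pos (by linarith) (by linarith)
  have hcpos : 0 < cc := by
    have : 0 < (n : ℝ) - 1 := by linarith
    positivity
  have hgdiff : Differentiable ℝ g := hg.differentiable (by simp)
  have hg'diff : Differentiable ℝ (deriv g) :=
    ((contDiff_infty_iff_deriv.mp (hg.of_le (by simp))).2).differentiable (by simp)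
  have hcond : ∀ (f : ℝ → ℝ), ContDiff ℝ (⊤ : ℕ∞) f →
      (∀ t, Sbar - a * (deriv f t) ^ 2 - cc * (f t) ^ 2 = 0) →
      (∀ t, 0 < f t) → ∀ t, deriv f t ≤ 0 := by
    intro f hf hODEf hposf
    have hfdiff : Differentiable ℝ f := hf.differentiable (by simp)
    have hf'diff : Differentiable ℝ (deriv f) :=
      ((contDiff_infty_iff_deriv.mp (hf.of_le (by simp))).2).differentiable (by simp)
    apply stmt_8_aux f hfdiff hf'diff _ hposf
    intro t htpos
    have hne : deriv f t ≠ 0 := ne_of_gt htpos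
    -- replicate hkey for f
    have h1 : HasDerivAt f (deriv f t) t := (hfdiff t).hasDerivAt
    have h2 : HasDerivAt (deriv f) (deriv (deriv f) t) t := (hf'diff t).hasDerivAt
    have hF : HasDerivAt (fun u => Sbar - a * (deriv f u) ^ 2 - cc * (f u) ^ 2)
        (0 - a * (2 * deriv f t ^ 1 * deriv (deriv f) t)
          - cc * (2 * f t ^ 1 * deriv f t)) t := by
      exact ((hasDerivAt_const t Sbar).sub
        ((h2.pow 2).const_mul a)).sub ((h1.pow 2).const_mul cc)
    have hzero : (fun u => Sbar - a * (deriv f u) ^ 2 - cc * (f u) ^ 2) = fun _ => (0:ℝ) := by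
      funext u; exact hODEf u
    rw [hzero] at hF
    have huniq := hF.unique (hasDerivAt_const t 0)
    have heq : deriv f t * (a * deriv (deriv f) t + cc * f t) = 0 := by nlinarith [huniq]
    rcases mul_eq_zero.mp heq with h | h
    · exact absurd h hne
    · nlinarith [hposf t, mul_pos hcpos (hposf t)]
  -- deriv g ≤ 0 everywhere
  have hle : ∀ t, deriv g t ≤ 0 := hcond g hg (fun t => hODE t) hpos
  -- reflection: deriv g ≥ 0 everywhere
  have hge : ∀ t, 0 ≤ deriv g t := by
    intro t₀
    set G : ℝ → ℝ := fun u => g (2 * t₀ - u) with hG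
    have hGcd : ContDiff ℝ (⊤ : ℕ∞) G := hg.comp (contDiff_const.sub contDiff_id)
    have hGderiv : ∀ u, deriv G u = -deriv g (2 * t₀ - u) := by
      intro u
      have : HasDerivAt G (deriv g (2 * t₀ - u) * (0 - 1)) u := by
        exact HasDerivAt.comp u (hgdiff _).hasDerivAt
          ((hasDerivAt_const u (2*t₀)).sub (hasDerivAt_id u))
      simpa using this.deriv
    have hGODE : ∀ u, Sbar - a * (deriv G u) ^ 2 - cc * (G u) ^ 2 = 0 := by
      intro u
      rw [hGderiv u]
      simpa using hODE (2 * t₀ - u)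
    have hGpos : ∀ u, 0 < G u := fun u => hpos _
    have := hcond G hGcd hGODE hGpos t₀
    rw [hGderiv t₀] at this
    have h2t : 2 * t₀ - t₀ = t₀ := by ring
    rw [h2t] at this
    linarith
  have hderiv0 : ∀ t, deriv g t = 0 := fun t => le_antisymm (hle t) (hge t)
  -- g is constant; compute its value
  intro t
  have hODEt := hODE t
  rw [hderiv0 t] at hODEt
  have hval : (g t) ^ 2 = Sbar / (2 * ((n : ℝ) - 1) * Q) := by
    rw [← hcc]
    field_simp
    nlinarith [hODEt]
  rw [← hval, Real.sqrt_sq (hpos t).le]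
end
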